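/- arXiv:1903.11585 — 2 statements merged into one kernel-verified Lean document; each statement's English description precedes it below -/
import Mathlib

section
/- Generalized Fatou lemma with varying measures: let ν_k be finite measures on a measurable space converging setwise to a measure ν (i.e., ν_k(E) → ν(E) for every measurable E), and let f_k be nonnegative measurable functions converging pointwise a.e. (with respect to ν) to f. Then ∫ f dν ≤ liminf_k ∫ f_k dν_k. -/
open MeasureTheory Filter Topology
open scoped ENNReal

noncomputable section

/-- Euclidean space ℝⁿ. -/
abbrev En (n : ℕ) := EuclideanSpace ℝ (Fin n)

/-- The (s,p)-nonlocal gradient `D_{s,p}u(x,y) = (u x − u y)/|x−y|^{n/p+s}`. -/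
def Dsp (n : ℕ) (s p : ℝ) (u : En n → ℝ) (z : En n × En n) : ℝ :=
  (u z.1 - u z.2) / ‖z.1 - z.2‖ ^ ((n : ℝ) / p + s)

/-- The Gagliardo seminorm `|u|_{s,p}`. -/
def gagSem (n : ℕ) (s p : ℝ) (u : En n → ℝ) : ℝ :=
  (∫ z : En n × En n, |u z.1 - u z.2| ^ p / ‖z.1 - z.2‖ ^ ((n : ℝ) + s * p)) ^ (1 / p)

/-- Membership in `W^{s,p}(ℝⁿ)`. -/
def MemWsp (n : ℕ) (s p : ℝ) (u : En n → ℝ) : Prop :=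
  MemLp u (ENNReal.ofReal p) volume ∧
  Integrable (fun z : En n × En n =>
    |u z.1 - u z.2| ^ p / ‖z.1 - z.2‖ ^ ((n : ℝ) + s * p)) volume

/-- The full `W^{s,p}(ℝⁿ)` norm. -/
def normWsp (n : ℕ) (s p : ℝ) (u : En n → ℝ) : ℝ :=
  ((∫ x : En n, |u x| ^ p) + (gagSem n s p u) ^ p) ^ (1 / p)

/-- Membership in `W^{s,p}_0(Ω)`: fractional Sobolev functions vanishing a.e. outside Ω. -/
def MemW0 (n : ℕ) (s p : ℝ) (Ω : Set (En n)) (u : En n → ℝ) : Prop :=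
  MemWsp n s p u ∧ ∀ᵐ x : En n, x ∉ Ω → u x = 0

/-- The class `𝒜_{λ,Λ}` of symmetric coefficients bounded between `lam` and `Lam`. -/
def MemA (n : ℕ) (lam Lam : ℝ) (a : En n × En n → ℝ) : Prop :=
  Measurable a ∧ ∀ᵐ z : En n × En n, a z = a (z.2, z.1) ∧ lam ≤ a z ∧ a z ≤ Lam

/-- A bounded (continuous) linear functional on `W^{s,p}_0(Ω)`, i.e. an element
of `W^{−s,p'}(Ω)`, represented by a linear map bounded w.r.t. the Gagliardo seminorm. -/
def IsDualW0 (n : ℕ) (s p : ℝ) (Ω : Set (En n)) (F : (En n → ℝ) →ₗ[ℝ] ℝ) : Prop :=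
  ∃ C : ℝ, ∀ u : En n → ℝ, MemW0 n s p Ω u → |F u| ≤ C * gagSem n s p u

/-- The nonlocal flux `q = a |D_{s,p}u|^{p−2} D_{s,p}u`. -/
def flux (n : ℕ) (s p : ℝ) (a : En n × En n → ℝ) (u : En n → ℝ) (z : En n × En n) : ℝ :=
  a z * |Dsp n s p u z| ^ (p - 2) * Dsp n s p u z

/-- `u` is the weak solution of the Dirichlet problem `ℒ_a u = f` in Ω, `u = 0` outside Ω. -/
def IsSol (n : ℕ) (s p : ℝ) (Ω : Set (En n)) (a : En n × En n → ℝ)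
    (F : (En n → ℝ) →ₗ[ℝ] ℝ) (u : En n → ℝ) : Prop :=
  MemW0 n s p Ω u ∧ ∀ v : En n → ℝ, MemW0 n s p Ω v →
    (1 / 2) * ∫ z : En n × En n, flux n s p a u z * Dsp n s p v z = F v

/-- Weak convergence in `W^{s,p}_0(Ω)`, tested against `L^{p'}` dual elements for
both the functions and their nonlocal gradients. -/
def WeakConvW0 (n : ℕ) (s p : ℝ) (uk : ℕ → En n → ℝ) (u : En n → ℝ) : Prop :=
  (∀ g : En n → ℝ, MemLp g (ENNReal.ofReal (p / (p - 1))) volume →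
    Tendsto (fun k => ∫ x, uk k x * g x) atTop (𝓝 (∫ x, u x * g x))) ∧
  (∀ ψ : En n × En n → ℝ, MemLp ψ (ENNReal.ofReal (p / (p - 1))) volume →
    Tendsto (fun k => ∫ z, Dsp n s p (uk k) z * ψ z) atTop
      (𝓝 (∫ z, Dsp n s p u z * ψ z)))

/-- Weak convergence of the fluxes in `L^{p'}(Ω×Ω)`, tested against `L^p` functions. -/
def WeakConvFlux (n : ℕ) (s p : ℝ) (Ω : Set (En n)) (qk : ℕ → En n × En n → ℝ)
    (q : En n × En n → ℝ) : Prop :=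
  ∀ ψ : En n × En n → ℝ, MemLp ψ (ENNReal.ofReal p) volume →
    Tendsto (fun k => ∫ z in Ω ×ˢ Ω, qk k z * ψ z) atTop
      (𝓝 (∫ z in Ω ×ˢ Ω, q z * ψ z))

/-- `ℒ_{a_k}` H-converges to `ℒ_a` (Definition 1): for every right-hand side,
states converge weakly in `W^{s,p}_0(Ω)` and fluxes weakly in `L^{p'}(Ω×Ω)`. -/
def HConv (n : ℕ) (s p : ℝ) (Ω : Set (En n)) (ak : ℕ → En n × En n → ℝ)
    (a : En n × En n → ℝ) : Prop :=
  ∀ F : (En n → ℝ) →ₗ[ℝ] ℝ, IsDualW0 n s p Ω F →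
    ∀ uk : ℕ → En n → ℝ, ∀ u : En n → ℝ,
      (∀ k, IsSol n s p Ω (ak k) F (uk k)) → IsSol n s p Ω a F u →
        WeakConvW0 n s p uk u ∧
        WeakConvFlux n s p Ω (fun k => flux n s p (ak k) (uk k)) (flux n s p a u)

/-- `ℒ_{a_k}` G-converges to `ℒ_a`: only weak convergence of the states is required. -/
def GConv (n : ℕ) (s p : ℝ) (Ω : Set (En n)) (ak : ℕ → En n × En n → ℝ)
    (a : En n × En n → ℝ) : Prop :=
  ∀ F : (En n → ℝ) →ₗ[ℝ] ℝ, IsDualW0 n s p Ω F →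
    ∀ uk : ℕ → En n → ℝ, ∀ u : En n → ℝ,
      (∀ k, IsSol n s p Ω (ak k) F (uk k)) → IsSol n s p Ω a F u →
        WeakConvW0 n s p uk u

/-- Weak-* convergence in `L^∞(ℝⁿ×ℝⁿ)`: convergence tested against all `L¹` functions. -/
def WeakStarLinf (n : ℕ) (ak : ℕ → En n × En n → ℝ) (a : En n × En n → ℝ) : Prop :=
  ∀ φ : En n × En n → ℝ, Integrable φ volume →
    Tendsto (fun k => ∫ z, ak k z * φ z) atTop (𝓝 (∫ z, a z * φ z))

/-- The nonlocal Dirichlet energy `I_a(v) = (1/(2p)) ∫∫ a|D_{s,p}v|^p − ⟨f,v⟩`. -/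
def Ifun (n : ℕ) (s p : ℝ) (a : En n × En n → ℝ) (F : (En n → ℝ) →ₗ[ℝ] ℝ)
    (v : En n → ℝ) : ℝ :=
  (1 / (2 * p)) * (∫ z : En n × En n, a z * |Dsp n s p v z| ^ p) - F v

/-!
Setwise convergence makes `ν ↦ ∫⁻ φ ∂ν` continuous for every finite-valued simple function `φ`,
since such an integral is a finite combination of measures of sets. Approximating a measurable `g`
from below by simple functions then gives lower semicontinuity, `∫⁻ g ∂ν₀ ≤ liminf ∫⁻ g ∂νₖ`.
Fatou follows as in the classical case: apply this to the increasing functions `⨅ k ≥ m, fₖ`,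
whose supremum is `liminf fₖ = f₀` a.e., and use monotone convergence.
-/

namespace MeasureTheory

section SetwiseConvergence

variable {X ι : Type*} [MeasurableSpace X] {l : Filter ι} {ν : ι → Measure X} {ν₀ : Measure X}

theorem SimpleFunc.tendsto_lintegral_of_tendsto_measure
    (hν : ∀ E, MeasurableSet E → Tendsto (fun i => ν i E) l (𝓝 (ν₀ E)))
    (φ : SimpleFunc X ℝ≥0∞) (hφ : ∀ x, φ x ≠ ∞) :
    Tendsto (fun i => φ.lintegral (ν i)) l (𝓝 (φ.lintegral ν₀)) := by
  refine tendsto_finsetSum _ fun y hy => ?_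
  obtain ⟨x, rfl⟩ := SimpleFunc.mem_range.mp hy
  exact ENNReal.Tendsto.const_mul (hν _ (φ.measurableSet_preimage _)) (Or.inr (hφ x))

theorem lintegral_le_liminf_of_tendsto_measure [l.NeBot]
    (hν : ∀ E, MeasurableSet E → Tendsto (fun i => ν i E) l (𝓝 (ν₀ E)))
    {g : X → ℝ≥0∞} (hg : Measurable g) :
    ∫⁻ x, g x ∂ν₀ ≤ liminf (fun i => ∫⁻ x, g x ∂ν i) l := by
  rw [lintegral_eq_iSup_eapprox_lintegral hg]
  refine iSup_le fun n => ?_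
  have hφ := SimpleFunc.tendsto_lintegral_of_tendsto_measure hν (SimpleFunc.eapprox g n)
    fun x => (SimpleFunc.eapprox_lt_top g n x).ne
  rw [← hφ.liminf_eq]
  refine liminf_le_liminf (Eventually.of_forall fun i => ?_)
  rw [← SimpleFunc.lintegral_eq_lintegral]
  exact lintegral_mono fun x => SimpleFunc.iSup_eapprox_apply hg x ▸
    le_iSup (fun n => SimpleFunc.eapprox g n x) n

end SetwiseConvergence

theorem lintegral_liminf_le_liminf_of_tendsto_measure {X : Type*} [MeasurableSpace X]
    {ν : ℕ → Measure X} {ν₀ : Measure X}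
    (hν : ∀ E, MeasurableSet E → Tendsto (fun k => ν k E) atTop (𝓝 (ν₀ E)))
    {f : ℕ → X → ℝ≥0∞} (hf : ∀ k, Measurable (f k)) :
    ∫⁻ x, liminf (fun k => f k x) atTop ∂ν₀ ≤ liminf (fun k => ∫⁻ x, f k x ∂ν k) atTop := by
  set g : ℕ → X → ℝ≥0∞ := fun m x => ⨅ k ≥ m, f k x
  have hg : ∀ m, Measurable (g m) := fun m => .iInf fun k => .iInf fun _ => hf k
  have hg_mono : Monotone g := fun m m' hm x => biInf_mono fun _ hk => hm.trans hk
  simp_rw [liminf_eq_iSup_iInf_of_nat (u := fun k => f k _)]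
  rw [lintegral_iSup hg hg_mono]
  refine iSup_le fun m => (lintegral_le_liminf_of_tendsto_measure hν (hg m)).trans ?_
  refine liminf_le_liminf ?_
  filter_upwards [eventually_ge_atTop m] with k hk
  exact lintegral_mono fun x => iInf₂_le k hk

end MeasureTheory

theorem generalized_fatou_varying_measures_general
    {X : Type*} [MeasurableSpace X] (ν : ℕ → Measure X) (ν0 : Measure X)
    (hset : ∀ E : Set X, MeasurableSet E → Tendsto (fun k => ν k E) atTop (𝓝 (ν0 E)))
    (f : ℕ → X → ℝ≥0∞) (f0 : X → ℝ≥0∞)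
    (hmeas : ∀ k, Measurable (f k))
    (hae : ∀ᵐ x ∂ν0, Tendsto (fun k => f k x) atTop (𝓝 (f0 x))) :
    ∫⁻ x, f0 x ∂ν0 ≤ atTop.liminf (fun k => ∫⁻ x, f k x ∂(ν k)) :=
  calc ∫⁻ x, f0 x ∂ν0 = ∫⁻ x, atTop.liminf (fun k => f k x) ∂ν0 :=
        lintegral_congr_ae (hae.mono fun _ hx => hx.liminf_eq.symm)
    _ ≤ _ := lintegral_liminf_le_liminf_of_tendsto_measure hset hmeas

theorem generalized_fatou_varying_measures
    {X : Type*} [MeasurableSpace X] (ν : ℕ → Measure X) (ν0 : Measure X)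
    (hfin : ∀ k, IsFiniteMeasure (ν k)) (hfin0 : IsFiniteMeasure ν0)
    (hset : ∀ E : Set X, MeasurableSet E → Tendsto (fun k => ν k E) atTop (𝓝 (ν0 E)))
    (f : ℕ → X → ℝ≥0∞) (f0 : X → ℝ≥0∞)
    (hmeas : ∀ k, Measurable (f k)) (hmeas0 : Measurable f0)
    (hae : ∀ᵐ x ∂ν0, Tendsto (fun k => f k x) atTop (𝓝 (f0 x))) :
    ∫⁻ x, f0 x ∂ν0 ≤ atTop.liminf (fun k => ∫⁻ x, f k x ∂(ν k)) :=
  generalized_fatou_varying_measures_general ν ν0 hset f f0 hmeas hae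

end
end

section
/- Energy continuity under H-convergence: if ℒ_{a_k} H-converges to ℒ_a, then for every f ∈ W^{−s,p'}(Ω) the energies converge: ∫∫ a_k|D_{s,p}u_k|^p dx dy → ∫∫ a|D_{s,p}u|^p dx dy, where u_k, u are the respective solutions with right-hand side f. -/
/-!
Since `f` is the same for all `k`, testing the limit equation `ℒ_a u = f` with `u_k` gives
`∫∫ a_k |D_{s,p}u_k|^p = 2⟨f, u_k⟩ = ∫∫ q D_{s,p}u_k`, where `q = a|D_{s,p}u|^{p-2} D_{s,p}u`
is the flux of `u`. As `a` is bounded, `q ∈ L^{p'}`, so weak convergence of `D_{s,p}u_k`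
to `D_{s,p}u` in `L^p` carries the right-hand side to `∫∫ q D_{s,p}u = ∫∫ a |D_{s,p}u|^p`.
-/

open MeasureTheory Filter Topology
open scoped ENNReal

noncomputable section

lemma abs_rpow_sub_two_mul_mul_self {p : ℝ} (hp : p ≠ 0) (x : ℝ) :
    |x| ^ (p - 2) * (x * x) = |x| ^ p := by
  rw [← sq, ← sq_abs, ← Real.rpow_two,
    ← Real.rpow_add' (abs_nonneg x) (by simpa using hp), sub_add_cancel]

lemma abs_rpow_sub_two_mul_abs {p : ℝ} (hp : p ≠ 1) (x : ℝ) :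
    |x| ^ (p - 2) * |x| = |x| ^ (p - 1) := by
  conv_rhs => rw [show p - 1 = p - 2 + 1 by ring,
    Real.rpow_add' (abs_nonneg x) (by rwa [show p - 2 + 1 = p - 1 by ring, sub_ne_zero]),
    Real.rpow_one]

section NonlocalGradient

variable {n : ℕ} {s p : ℝ}

lemma abs_Dsp_rpow (hp : p ≠ 0) (u : En n → ℝ) (z : En n × En n) :
    |Dsp n s p u z| ^ p = |u z.1 - u z.2| ^ p / ‖z.1 - z.2‖ ^ ((n : ℝ) + s * p) := by
  have hnorm : (0 : ℝ) ≤ ‖z.1 - z.2‖ := norm_nonneg _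
  rw [Dsp, abs_div, abs_of_nonneg (Real.rpow_nonneg hnorm _),
    Real.div_rpow (abs_nonneg _) (Real.rpow_nonneg hnorm _), ← Real.rpow_mul hnorm]
  congr 2
  field_simp

lemma aemeasurable_Dsp {u : En n → ℝ} (hu : AEMeasurable u) :
    AEMeasurable (Dsp n s p u) := by
  rw [Measure.volume_eq_prod]
  have hfst := hu.comp_quasiMeasurePreserving
    (Measure.quasiMeasurePreserving_fst (μ := volume) (ν := (volume : Measure (En n))))
  have hsnd := hu.comp_quasiMeasurePreserving
    (Measure.quasiMeasurePreserving_snd (μ := (volume : Measure (En n))) (ν := volume))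
  exact (hfst.sub hsnd).div
    (((measurable_fst.sub measurable_snd).norm).pow measurable_const).aemeasurable

lemma MemWsp.memLp_Dsp (hp : 0 < p) {u : En n → ℝ} (hu : MemWsp n s p u) :
    MemLp (Dsp n s p u) (ENNReal.ofReal p) := by
  have hmeas := (aemeasurable_Dsp (s := s) (p := p) hu.1.1.aemeasurable).aestronglyMeasurable
  refine (integrable_norm_rpow_iff hmeas (by simpa using hp) ENNReal.ofReal_ne_top).1 ?_
  simp_rw [ENNReal.toReal_ofReal hp.le, Real.norm_eq_abs, abs_Dsp_rpow hp.ne']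
  exact hu.2

lemma memLp_flux (hp : 1 < p) {a : En n × En n → ℝ} {C : ℝ} (ha : AEMeasurable a)
    (haC : ∀ᵐ z, |a z| ≤ C) {u : En n → ℝ} (hu : MemLp (Dsp n s p u) (ENNReal.ofReal p)) :
    MemLp (flux n s p a u) (ENNReal.ofReal (p / (p - 1))) := by
  have hpow := hu.norm_rpow_div (ENNReal.ofReal (p - 1))
  rw [← ENNReal.ofReal_div_of_pos (by linarith), ENNReal.toReal_ofReal (by linarith)] at hpow
  have hD := hu.1.aemeasurable
  refine hpow.of_le_mul (c := C)
    ((ha.mul ((measurable_abs.comp_aemeasurable hD).pow_const _)).mul hD).aestronglyMeasurable ?_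
  filter_upwards [haC] with z hz
  have hnn : (0 : ℝ) ≤ |Dsp n s p u z| ^ (p - 1) := Real.rpow_nonneg (abs_nonneg _) _
  simp only [flux, norm_mul, Real.norm_eq_abs]
  rw [abs_of_nonneg (Real.rpow_nonneg (abs_nonneg _) _), mul_assoc,
    abs_rpow_sub_two_mul_abs hp.ne', abs_of_nonneg hnn]
  exact mul_le_mul_of_nonneg_right hz hnn

lemma flux_mul_Dsp_self (hp : p ≠ 0) (a : En n × En n → ℝ) (u : En n → ℝ)
    (z : En n × En n) : flux n s p a u z * Dsp n s p u z = a z * |Dsp n s p u z| ^ p := by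
  rw [flux, mul_assoc, mul_assoc, abs_rpow_sub_two_mul_mul_self hp]

end NonlocalGradient

lemma MemA.ae_abs_le {n : ℕ} {lam Lam : ℝ} {a : En n × En n → ℝ} (ha : MemA n lam Lam a) :
    ∀ᵐ z, |a z| ≤ max |lam| |Lam| :=
  ha.2.mono fun _ hz => abs_le_max_abs_abs hz.2.1 hz.2.2

namespace IsSol

variable {n : ℕ} {s p : ℝ} {Ω : Set (En n)} {a b : En n × En n → ℝ}
  {F : (En n → ℝ) →ₗ[ℝ] ℝ} {u v : En n → ℝ}

lemma integral_flux_mul_Dsp (hu : IsSol n s p Ω a F u) (hv : MemW0 n s p Ω v) :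
    ∫ z, flux n s p a u z * Dsp n s p v z = 2 * F v := by
  linarith [hu.2 v hv]

lemma integral_energy (hp : p ≠ 0) (hu : IsSol n s p Ω a F u) :
    ∫ z, a z * |Dsp n s p u z| ^ p = 2 * F u := by
  simp_rw [← flux_mul_Dsp_self hp]
  exact hu.integral_flux_mul_Dsp hu.1

lemma integral_Dsp_mul_flux (hp : p ≠ 0) (hu : IsSol n s p Ω a F u)
    (hv : IsSol n s p Ω b F v) :
    ∫ z, Dsp n s p v z * flux n s p a u z = ∫ z, b z * |Dsp n s p v z| ^ p := by
  simp_rw [mul_comm (Dsp n s p v _)]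
  rw [hu.integral_flux_mul_Dsp hv.1, hv.integral_energy hp]

end IsSol

theorem energy_continuity_under_HConv_general
    (n : ℕ) (s p lam Lam : ℝ) (hp : 1 < p)
    (Ω : Set (En n))
    (ak : ℕ → En n × En n → ℝ)
    (a : En n × En n → ℝ) (ha : MemA n lam Lam a)
    (hH : HConv n s p Ω ak a)
    (F : (En n → ℝ) →ₗ[ℝ] ℝ) (hF : IsDualW0 n s p Ω F)
    (uk : ℕ → En n → ℝ) (u : En n → ℝ)
    (huk : ∀ k, IsSol n s p Ω (ak k) F (uk k)) (hu : IsSol n s p Ω a F u) :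
    Tendsto (fun k => ∫ z : En n × En n, ak k z * |Dsp n s p (uk k) z| ^ p) atTop
      (𝓝 (∫ z : En n × En n, a z * |Dsp n s p u z| ^ p)) := by
  have hp0 : p ≠ 0 := by positivity
  have hq : MemLp (flux n s p a u) (ENNReal.ofReal (p / (p - 1))) :=
    memLp_flux hp ha.1.aemeasurable ha.ae_abs_le (hu.1.1.memLp_Dsp (by positivity))
  have hlim := (hH F hF uk u huk hu).1.2 _ hq
  rw [hu.integral_Dsp_mul_flux hp0 hu] at hlim
  exact hlim.congr fun k => hu.integral_Dsp_mul_flux hp0 (huk k)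

theorem energy_continuity_under_HConv
    (n : ℕ) (s p lam Lam : ℝ) (hp : 1 < p) (hs : s ∈ Set.Ioo (0:ℝ) 1)
    (hlam : 0 < lam) (hlL : lam ≤ Lam)
    (Ω : Set (En n)) (hΩm : MeasurableSet Ω) (hΩb : Bornology.IsBounded Ω)
    (ak : ℕ → En n × En n → ℝ) (hak : ∀ k, MemA n lam Lam (ak k))
    (a : En n × En n → ℝ) (ha : MemA n lam Lam a)
    (hH : HConv n s p Ω ak a)
    (F : (En n → ℝ) →ₗ[ℝ] ℝ) (hF : IsDualW0 n s p Ω F)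
    (uk : ℕ → En n → ℝ) (u : En n → ℝ)
    (huk : ∀ k, IsSol n s p Ω (ak k) F (uk k)) (hu : IsSol n s p Ω a F u) :
    Tendsto (fun k => ∫ z : En n × En n, ak k z * |Dsp n s p (uk k) z| ^ p) atTop
      (𝓝 (∫ z : En n × En n, a z * |Dsp n s p u z| ^ p)) :=
  energy_continuity_under_HConv_general n s p lam Lam hp Ω ak a ha hH F hF uk u huk hu

end
end
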